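/- arXiv:1407.6665 — 2 statements merged into one kernel-verified Lean document; each statement's English description precedes it below -/
import Mathlib

section
/- If a node v has rank at least k and at most (k/2)·F unmarked children, then v has at least k·ρ̂/2 efficiently linked unmarked children, each having rank less than k. -/
/-- A node of a heap structure, recording only what the rank function depends on:
whether the node is marked, and the ordered list of its children (leftmost first). -/
inductive MTree : Type
  | node (marked : Bool) (children : List MTree) : MTree

def MTree.marked : MTree → Bool
  | .node m _ => m

def MTree.children : MTree → List MTree
  | .node _ cs => cs

/-- The parameters of the rank function: `rho` is `ρ̂ = 2 f(n) + 1`, `F` is the default-case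
threshold, and `w` is the fixed window constant of the efficient-link condition. -/
structure RankParams where
  rho : ℕ
  F : ℕ
  w : ℕ

/-- One step of the right-to-left computation of the rank of a node from the ranks of its
unmarked children.  The state is `(r, run, eff, effRanks)`: the current value `r_{i-1}(x)`,
the size so far of `noninc(y_i)` minus one (the current maximal run of non-incremental right
siblings), the number of efficiently linked elements of that run, and the list of ranks of all
efficiently linked unmarked children seen so far.  Child `y_i` (of rank `cr`) is efficiently
linked iff `r_{i-1}(x) − w ≤ cr ≤ r_{i-1}(x)`; the value increments (`r_i(x) = r_{i-1}(x)+1`)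
exactly when `y_i` is efficiently linked and is the `ρ̂`-th efficiently linked element of
`noninc(y_i)` (efficient case) or `|noninc(y_i)| = F` (default case). -/
def rankStep (P : RankParams) (st : ℕ × ℕ × ℕ × List ℕ) (cr : ℕ) : ℕ × ℕ × ℕ × List ℕ :=
  let r := st.1
  let run := st.2.1
  let eff := st.2.2.1
  let effRanks := st.2.2.2
  let isEff : Bool := decide (r ≤ cr + P.w) && decide (cr ≤ r)
  let eff' := if isEff then eff + 1 else eff
  let effRanks' := if isEff then effRanks ++ [cr] else effRanks
  let run' := run + 1
  if (isEff && decide (eff' = P.rho)) || decide (run' = P.F) then (r + 1, 0, 0, effRanks')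
  else (r, run', eff', effRanks')

/-- Fold the rank computation over the list of ranks of the unmarked children,
given right-to-left (in order of attachment). -/
def rankAux (P : RankParams) (rs : List ℕ) : ℕ × ℕ × ℕ × List ℕ :=
  rs.foldl (rankStep P) (0, 0, 0, [])

/-- The full rank data of a node: its rank together with the ranks of its efficiently linked
unmarked children.  The children are processed right to left, and only unmarked children are
taken into account (the rank only depends on the unmarked subtree). -/
def MTree.rankData (P : RankParams) : MTree → ℕ × ℕ × ℕ × List ℕ
  | .node _ cs =>
      rankAux P
        (((cs.filter (fun c => !c.marked)).reverse).attach.map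
          (fun c => (MTree.rankData P c.1).1))
decreasing_by
  rename_i cs
  have hmem : c.1 ∈ cs := by
    have h := c.2
    rw [List.mem_reverse, List.mem_filter] at h
    exact h.1
  have := List.sizeOf_lt_of_mem hmem
  simp only [MTree.node.sizeOf_spec]
  omega

/-- The rank `r(x)` of a node. -/
def MTree.rank (P : RankParams) (t : MTree) : ℕ := (t.rankData P).1

/-- The ranks of the efficiently linked unmarked children of a node (right to left). -/
def MTree.effLinkedChildRanks (P : RankParams) (t : MTree) : List ℕ := (t.rankData P).2.2.2

/-- The number of nodes of the unmarked subtree of a node (the node's subtree after detaching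
every marked node from its parent). -/
def MTree.unmarkedSize : MTree → ℕ
  | .node _ cs => 1 + ((cs.filter (fun c => !c.marked)).attach.map
      (fun c => MTree.unmarkedSize c.1)).sum
decreasing_by
  rename_i cs
  have hmem : c.1 ∈ cs := by
    have h := c.2
    rw [List.mem_filter] at h
    exact h.1
  have := List.sizeOf_lt_of_mem hmem
  simp only [MTree.node.sizeOf_spec]
  omega

/-- The number of unmarked children of a node. -/
def MTree.unmarkedChildrenCount (t : MTree) : ℕ :=
  (t.children.filter (fun c => !c.marked)).length

/-!
Amortization over the right-to-left computation of the rank of `v`, with the potential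
`F ρ̂ · min(r, k) + [r < k] (ρ̂ · run + F · eff)` of the computation state. Processing one child
raises it by at most `ρ̂`, plus `F` when that child is efficiently linked of rank `< k`: below
rank `k`, an increment of `r` is paid for either by the `F` children of the finished run
(default case) or by its `ρ̂` efficiently linked children (efficient case), whose ranks are
`≤ r < k`. Hence, with `c` the number of efficiently linked children of rank `< k`,
`F ρ̂ k ≤ ρ̂ · #children + F c`, and `2 · #children ≤ k F` gives `ρ̂ k ≤ 2 c`.
-/

lemma rankStep_eq (P : RankParams) (r run eff : ℕ) (L : List ℕ) (cr : ℕ) :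
    rankStep P (r, run, eff, L) cr =
      if r ≤ cr + P.w ∧ cr ≤ r then
        if eff + 1 = P.rho ∨ run + 1 = P.F then (r + 1, 0, 0, L ++ [cr])
        else (r, run + 1, eff + 1, L ++ [cr])
      else
        if run + 1 = P.F then (r + 1, 0, 0, L) else (r, run + 1, eff, L) := by
  by_cases h1 : r ≤ cr + P.w <;> by_cases h2 : cr ≤ r <;> simp [rankStep, h1, h2]

lemma le_rankStep_fst (P : RankParams) (st : ℕ × ℕ × ℕ × List ℕ) (cr : ℕ) :
    st.1 ≤ (rankStep P st cr).1 := by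
  obtain ⟨r, run, eff, L⟩ := st
  rw [rankStep_eq]
  split_ifs <;> simp

lemma rankStep_fst_le_succ (P : RankParams) (st : ℕ × ℕ × ℕ × List ℕ) (cr : ℕ) :
    (rankStep P st cr).1 ≤ st.1 + 1 := by
  obtain ⟨r, run, eff, L⟩ := st
  rw [rankStep_eq]
  split_ifs <;> simp

lemma rankStep_effRanks_prefix (P : RankParams) (st : ℕ × ℕ × ℕ × List ℕ) (cr : ℕ) :
    st.2.2.2 <+: (rankStep P st cr).2.2.2 := by
  obtain ⟨r, run, eff, L⟩ := st
  rw [rankStep_eq]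
  split_ifs <;> simp

def rankPotential (P : RankParams) (k : ℕ) (st : ℕ × ℕ × ℕ × List ℕ) : ℕ :=
  P.F * P.rho * min st.1 k + if st.1 < k then P.rho * st.2.1 + P.F * st.2.2.1 else 0

lemma mul_min_le_rankPotential (P : RankParams) (k : ℕ) (st : ℕ × ℕ × ℕ × List ℕ) :
    P.F * P.rho * min st.1 k ≤ rankPotential P k st :=
  Nat.le_add_right _ _

lemma rankPotential_of_lt {P : RankParams} {k : ℕ} {st : ℕ × ℕ × ℕ × List ℕ} (h : st.1 < k) :
    rankPotential P k st = P.F * P.rho * st.1 + P.rho * st.2.1 + P.F * st.2.2.1 := by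
  simp [rankPotential, h, min_eq_left h.le, add_assoc]

lemma rankPotential_of_le {P : RankParams} {k : ℕ} {st : ℕ × ℕ × ℕ × List ℕ} (h : k ≤ st.1) :
    rankPotential P k st = P.F * P.rho * k := by
  simp [rankPotential, min_eq_right h, Nat.not_lt.mpr h]

lemma rankPotential_reset_le (P : RankParams) (k r : ℕ) (L : List ℕ) :
    rankPotential P k (r, 0, 0, L) ≤ P.F * P.rho * r := by
  simp only [rankPotential, mul_zero, add_zero, ite_self]
  exact Nat.mul_le_mul_left _ (min_le_left r k)

lemma rankPotential_rankStep_le (P : RankParams) (k : ℕ) (st : ℕ × ℕ × ℕ × List ℕ) (cr : ℕ) :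
    rankPotential P k (rankStep P st cr) + P.F * st.2.2.2.countP (· < k) ≤
      rankPotential P k st + P.rho + P.F * (rankStep P st cr).2.2.2.countP (· < k) := by
  rcases le_or_gt k st.1 with hkr | hrk
  · have hcount := (rankStep_effRanks_prefix P st cr).sublist.countP_le (p := (· < k))
    rw [rankPotential_of_le hkr, rankPotential_of_le (hkr.trans (le_rankStep_fst P st cr))]
    nlinarith
  obtain ⟨r, run, eff, L⟩ := st
  rw [rankPotential_of_lt hrk]
  simp only at hrk ⊢
  rw [rankStep_eq]
  split_ifs with hE hI hI
  · have hcr : cr < k := by omega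
    have := rankPotential_reset_le P k (r + 1) (L ++ [cr])
    simp only [List.countP_append, List.countP_singleton, hcr, decide_true, if_true]
    rcases hI with hI | hI <;> nlinarith
  · have hcr : cr < k := by omega
    rw [rankPotential_of_lt (st := (r, run + 1, eff + 1, L ++ [cr])) hrk]
    simp only [List.countP_append, List.countP_singleton, hcr, decide_true, if_true]
    nlinarith
  · have := rankPotential_reset_le P k (r + 1) L
    nlinarith
  · rw [rankPotential_of_lt (st := (r, run + 1, eff, L)) hrk]
    nlinarith

lemma rankPotential_foldl_le (P : RankParams) (k : ℕ) (rs : List ℕ) (st : ℕ × ℕ × ℕ × List ℕ) :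
    rankPotential P k (rs.foldl (rankStep P) st) + P.F * st.2.2.2.countP (· < k) ≤
      rankPotential P k st + P.rho * rs.length +
        P.F * (rs.foldl (rankStep P) st).2.2.2.countP (· < k) := by
  induction rs generalizing st with
  | nil => simp
  | cons cr rs ih =>
    have hstep := rankPotential_rankStep_le P k st cr
    have hrest := ih (rankStep P st cr)
    simp only [List.foldl_cons, List.length_cons, Nat.mul_succ]
    omega

lemma rankPotential_rankAux_le (P : RankParams) (k : ℕ) (rs : List ℕ) :
    rankPotential P k (rankAux P rs) ≤
      P.rho * rs.length + P.F * (rankAux P rs).2.2.2.countP (· < k) := by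
  have h := rankPotential_foldl_le P k rs (0, 0, 0, [])
  have h0 : rankPotential P k (0, 0, 0, []) = 0 := by simp [rankPotential]
  unfold rankAux
  simpa only [h0, List.countP_nil, mul_zero, add_zero, zero_add] using h

lemma foldl_rankStep_fst_le (P : RankParams) (rs : List ℕ) (st : ℕ × ℕ × ℕ × List ℕ) :
    (rs.foldl (rankStep P) st).1 ≤ st.1 + rs.length := by
  induction rs generalizing st with
  | nil => simp
  | cons cr rs ih =>
    have hstep := rankStep_fst_le_succ P st cr
    have hrest := ih (rankStep P st cr)
    simp only [List.foldl_cons, List.length_cons]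
    omega

lemma rankAux_fst_le_length (P : RankParams) (rs : List ℕ) : (rankAux P rs).1 ≤ rs.length := by
  unfold rankAux
  simpa only [zero_add] using foldl_rankStep_fst_le P rs (0, 0, 0, [])

namespace MTree

def unmarkedChildRanks (P : RankParams) (t : MTree) : List ℕ :=
  (t.children.filter (fun c => !c.marked)).reverse.map (rank P)

lemma rankData_eq_rankAux (P : RankParams) (t : MTree) :
    t.rankData P = rankAux P (t.unmarkedChildRanks P) := by
  obtain ⟨m, cs⟩ := t
  rw [rankData, List.attach_map_val (f := fun c => (rankData P c).1)]
  rfl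

lemma length_unmarkedChildRanks (P : RankParams) (t : MTree) :
    (t.unmarkedChildRanks P).length = t.unmarkedChildrenCount := by
  simp [unmarkedChildRanks, unmarkedChildrenCount]

lemma rank_le_unmarkedChildrenCount (P : RankParams) (t : MTree) :
    t.rank P ≤ t.unmarkedChildrenCount := by
  rw [rank, rankData_eq_rankAux, ← length_unmarkedChildRanks P]
  exact rankAux_fst_le_length P _

lemma mul_min_rank_le (P : RankParams) (k : ℕ) (t : MTree) :
    P.F * P.rho * min (t.rank P) k ≤
      P.rho * t.unmarkedChildrenCount + P.F * (t.effLinkedChildRanks P).countP (· < k) := by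
  rw [rank, effLinkedChildRanks, rankData_eq_rankAux, ← length_unmarkedChildRanks P]
  exact (mul_min_le_rankPotential P k _).trans (rankPotential_rankAux_le P k _)

end MTree

theorem many_efficiently_linked_children_of_small_rank_general
    (P : RankParams) (v : MTree) (k : ℕ)
    (h_rank : k ≤ v.rank P)
    (h_children : 2 * v.unmarkedChildrenCount ≤ k * P.F) :
    k * P.rho ≤ 2 * ((v.effLinkedChildRanks P).filter (fun r => decide (r < k))).length := by
  rw [← List.countP_eq_length_filter]
  have hpot := v.mul_min_rank_le P k
  rw [min_eq_right h_rank] at hpot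
  rcases Nat.eq_zero_or_pos P.F with hF | hF
  · have hk : k = 0 := by
      have := v.rank_le_unmarkedChildrenCount P
      rw [hF, mul_zero] at h_children
      omega
    simp [hk]
  · refine Nat.le_of_mul_le_mul_left ?_ hF
    nlinarith

/-- (With `ρ̂ = 2 f(n) + 1` and `F = 2^α · ρ̂` as in the rank definition.)
If a node `v` has rank at least `k` and at most `(k/2) · F` unmarked children, then `v` has at
least `k · ρ̂ / 2` efficiently linked unmarked children, each having rank less than `k`. -/
theorem many_efficiently_linked_children_of_small_rank
    (fv α w : ℕ) (hfv : 1 ≤ fv)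
    (P : RankParams) (hP : P = ⟨2 * fv + 1, 2 ^ α * (2 * fv + 1), w⟩)
    (v : MTree) (k : ℕ)
    (h_rank : k ≤ v.rank P)
    (h_children : 2 * v.unmarkedChildrenCount ≤ k * P.F) :
    k * P.rho ≤ 2 * ((v.effLinkedChildRanks P).filter (fun r => decide (r < k))).length :=
  many_efficiently_linked_children_of_small_rank_general P v k h_rank h_children
end

section
/- Let ρ ≥ 3 be an integer and F a real number with ρ − 1 ≤ F ≤ ρ^{ρ−2} + ρ − 1. If a sequence s : ℕ → ℝ of nonnegative reals satisfies s_j ≤ ρ^j for all j ≤ ρ − 2, and s_k ≤ (ρ−1)·s_{k−1} + (F−ρ+1)·s_{k−(ρ−1)} for all k ≥ ρ − 1, then s_k ≤ ρ^k for all k ∈ ℕ. -/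
/-! The comparison sequence `ρ ^ k` satisfies the recurrence with `≥`: by the upper bound on `F`,
`(ρ - 1) ρ^(k-1) + (F - ρ + 1) ρ^(k-ρ+1) ≤ (ρ - 1) ρ^(k-1) + ρ^(ρ-2) ρ^(k-ρ+1) = ρ^k`.
Since both coefficients are nonnegative, strong induction on `k` transfers the base bounds
`s j ≤ ρ^j` to all `k`. -/

lemma mul_pow_sub_one_add_mul_pow_sub_le_pow {r a c : ℝ} {d k : ℕ} (hr : 0 ≤ r) (hd : 1 ≤ d)
    (hdk : d ≤ k) (hchar : a * r ^ (d - 1) + c ≤ r ^ d) :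
    a * r ^ (k - 1) + c * r ^ (k - d) ≤ r ^ k := by
  obtain ⟨m, rfl⟩ := Nat.exists_eq_add_of_le' hdk
  have hsplit : m + d - 1 = m + (d - 1) := by omega
  calc a * r ^ (m + d - 1) + c * r ^ (m + d - d)
      = r ^ m * (a * r ^ (d - 1) + c) := by rw [hsplit, Nat.add_sub_cancel, pow_add]; ring
    _ ≤ r ^ m * r ^ d := mul_le_mul_of_nonneg_left hchar (pow_nonneg hr m)
    _ = r ^ (m + d) := (pow_add r m d).symm

lemma le_pow_of_le_linear_recurrence {r a c : ℝ} {d : ℕ} (hr : 0 ≤ r) (hd : 1 ≤ d)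
    (ha : 0 ≤ a) (hc : 0 ≤ c) (hchar : a * r ^ (d - 1) + c ≤ r ^ d) {s : ℕ → ℝ}
    (hbase : ∀ j < d, s j ≤ r ^ j)
    (hrec : ∀ k, d ≤ k → s k ≤ a * s (k - 1) + c * s (k - d)) :
    ∀ k, s k ≤ r ^ k := by
  intro k
  induction k using Nat.strong_induction_on with
  | _ k ih =>
    rcases lt_or_ge k d with hkd | hdk
    · exact hbase k hkd
    calc s k ≤ a * s (k - 1) + c * s (k - d) := hrec k hdk
      _ ≤ a * r ^ (k - 1) + c * r ^ (k - d) := by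
        gcongr
        exacts [ih _ (by omega), ih _ (by omega)]
      _ ≤ r ^ k := mul_pow_sub_one_add_mul_pow_sub_le_pow hr hd hdk hchar

theorem pure_heap_rank_size_recurrence_general
    (ρ : ℕ) (hρ : 3 ≤ ρ) (F : ℝ)
    (hF₁ : (ρ : ℝ) - 1 ≤ F) (hF₂ : F ≤ (ρ : ℝ) ^ (ρ - 2) + (ρ : ℝ) - 1)
    (s : ℕ → ℝ)
    (hs_base : ∀ j ≤ ρ - 2, s j ≤ (ρ : ℝ) ^ j)
    (hs_rec : ∀ k, ρ - 1 ≤ k →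
      s k ≤ ((ρ : ℝ) - 1) * s (k - 1) + (F - (ρ : ℝ) + 1) * s (k - (ρ - 1))) :
    ∀ k, s k ≤ (ρ : ℝ) ^ k := by
  have hρ₁ : (1 : ℝ) ≤ ρ := by exact_mod_cast (by omega : 1 ≤ ρ)
  have hexp : ρ - 1 - 1 = ρ - 2 := by omega
  have hchar : ((ρ : ℝ) - 1) * (ρ : ℝ) ^ (ρ - 1 - 1) + (F - ρ + 1) ≤ (ρ : ℝ) ^ (ρ - 1) := by
    rw [hexp, show ρ - 1 = ρ - 2 + 1 by omega, pow_succ]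
    linarith
  exact le_pow_of_le_linear_recurrence (by linarith) (by omega) (by linarith) (by linarith)
    hchar (fun j hj => hs_base j (by omega)) hs_rec

/-- Let `ρ ≥ 3` be an integer and `F` a real number with
`ρ − 1 ≤ F ≤ ρ^(ρ−2) + ρ − 1`.  If a sequence `s : ℕ → ℝ` of nonnegative reals satisfies
`s j ≤ ρ^j` for all `j ≤ ρ − 2`, and
`s k ≤ (ρ−1)·s (k−1) + (F−ρ+1)·s (k−(ρ−1))` for all `k ≥ ρ − 1`,
then `s k ≤ ρ^k` for all `k : ℕ`.  (This is the recurrence bounding the maximum size of an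
unmarked heap of rank `k` in the pure-heap-model analysis.) -/
theorem pure_heap_rank_size_recurrence
    (ρ : ℕ) (hρ : 3 ≤ ρ) (F : ℝ)
    (hF₁ : (ρ : ℝ) - 1 ≤ F) (hF₂ : F ≤ (ρ : ℝ) ^ (ρ - 2) + (ρ : ℝ) - 1)
    (s : ℕ → ℝ)
    (hs_nonneg : ∀ j, 0 ≤ s j)
    (hs_base : ∀ j ≤ ρ - 2, s j ≤ (ρ : ℝ) ^ j)
    (hs_rec : ∀ k, ρ - 1 ≤ k →
      s k ≤ ((ρ : ℝ) - 1) * s (k - 1) + (F - (ρ : ℝ) + 1) * s (k - (ρ - 1))) :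
    ∀ k, s k ≤ (ρ : ℝ) ^ k :=
  pure_heap_rank_size_recurrence_general ρ hρ F hF₁ hF₂ s hs_base hs_rec
end
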